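/- arXiv:2511.12849 — 3 statements merged into one kernel-verified Lean document; each statement's English description precedes it below -/
import Mathlib

section
/- Equality case of Young's inequality: for an Orlicz function φ with right-derivative p and complementary function ψ with right-derivative q, the equality u·v = φ(u) + ψ(v) holds if and only if v ∈ [p₋(u), p(u)], where p₋(0)=0 and p₋(t) = sup{p(s) : 0 ≤ s < t} for t > 0. -/
open MeasureTheory Set Filter
open scoped Topology

/-! The equality `u v = φ u + ψ v` says that `u` maximizes `w ↦ w v - φ w` on `[0, ∞)`, i.e. that
`v` is a subgradient of `φ` at `u`. Since `φ b - φ a = ∫_a^b p` with `p` non-decreasing, the slope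
of `φ` on `[a, b]` lies between `p a` and the supremum of `p` on `[a, b)`; letting `w → u` from the
right (using the right continuity of `p`) and from the left shows that the subgradients at `u` are
exactly `[p₋ u, p u]`. The competitor `w = 0`, absent from the supremum defining `ψ`, is
recovered because `φ w → 0` as `w → 0⁺`. -/

def IsSubgradientOn (φ : ℝ → ℝ) (s : Set ℝ) (u v : ℝ) : Prop :=
  ∀ w ∈ s, (w - u) * v ≤ φ w - φ u

section Primitive

variable {φ p : ℝ → ℝ} {a b c : ℝ}

theorem integrableOn_Ioc_of_monotoneOn_Ici (hp : MonotoneOn p (Ici 0)) (ha : 0 ≤ a) :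
    IntegrableOn p (Ioc a b) :=
  ((hp.mono Icc_subset_Ici_self).integrableOn_isCompact (isCompact_Icc (a := 0) (b := b))).mono_set
    fun _ hx => ⟨ha.trans hx.1.le, hx.2⟩

theorem sub_eq_setIntegral_Ioc (hp : MonotoneOn p (Ici 0))
    (hφ : ∀ u ≥ 0, φ u = ∫ t in Ioc 0 u, p t) (ha : 0 ≤ a) (hab : a ≤ b) :
    φ b - φ a = ∫ t in Ioc a b, p t := by
  rw [hφ a ha, hφ b (ha.trans hab), ← Ioc_union_Ioc_eq_Ioc ha hab,
    setIntegral_union (Ioc_disjoint_Ioc_of_le le_rfl) measurableSet_Ioc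
      (integrableOn_Ioc_of_monotoneOn_Ici hp le_rfl) (integrableOn_Ioc_of_monotoneOn_Ici hp ha)]
  ring

theorem mul_le_sub_of_monotoneOn (hp : MonotoneOn p (Ici 0))
    (hφ : ∀ u ≥ 0, φ u = ∫ t in Ioc 0 u, p t) (ha : 0 ≤ a) (hab : a ≤ b) :
    (b - a) * p a ≤ φ b - φ a := by
  rw [sub_eq_setIntegral_Ioc hp hφ ha hab]
  calc (b - a) * p a = ∫ _ in Ioc a b, p a := by
        rw [setIntegral_const, Real.volume_real_Ioc_of_le hab, smul_eq_mul]
    _ ≤ ∫ t in Ioc a b, p t :=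
        setIntegral_mono_on (integrableOn_const measure_Ioc_lt_top.ne)
          (integrableOn_Ioc_of_monotoneOn_Ici hp ha) measurableSet_Ioc
          fun _ ht => hp ha (ha.trans ht.1.le) ht.1.le

theorem sub_le_mul_of_forall_Ioo_le (hp : MonotoneOn p (Ici 0))
    (hφ : ∀ u ≥ 0, φ u = ∫ t in Ioc 0 u, p t) (ha : 0 ≤ a) (hab : a ≤ b)
    (hc : ∀ t ∈ Ioo a b, p t ≤ c) :
    φ b - φ a ≤ (b - a) * c := by
  rw [sub_eq_setIntegral_Ioc hp hφ ha hab, integral_Ioc_eq_integral_Ioo]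
  calc ∫ t in Ioo a b, p t ≤ ∫ _ in Ioo a b, c :=
        setIntegral_mono_on ((integrableOn_Ioc_of_monotoneOn_Ici hp ha).mono_set Ioo_subset_Ioc_self)
          (integrableOn_const measure_Ioo_lt_top.ne) measurableSet_Ioo hc
    _ = (b - a) * c := by
        rw [setIntegral_const, Real.volume_real_Ioo_of_le hab, smul_eq_mul]

theorem tendsto_nhdsGT_zero_of_primitive (hp : MonotoneOn p (Ici 0))
    (hφ : ∀ u ≥ 0, φ u = ∫ t in Ioc 0 u, p t) :
    Tendsto φ (𝓝[>] 0) (𝓝 0) := by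
  have hφ0 : φ 0 = 0 := by simp [hφ 0 le_rfl]
  have hlower : ∀ w ≥ 0, w * p 0 ≤ φ w := fun w hw => by
    simpa [hφ0] using mul_le_sub_of_monotoneOn hp hφ le_rfl hw
  have hupper : ∀ w ∈ Icc (0 : ℝ) 1, φ w ≤ w * p 1 := fun w hw => by
    simpa [hφ0] using sub_le_mul_of_forall_Ioo_le hp hφ le_rfl hw.1
      fun t ht => hp ht.1.le (mem_Ici.2 zero_le_one) (ht.2.le.trans hw.2)
  have hlim : ∀ c : ℝ, Tendsto (fun w => w * c) (𝓝[>] 0) (𝓝 0) := fun c => by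
    simpa using ((continuous_mul_const c).tendsto' 0 0 (zero_mul c)).mono_left nhdsWithin_le_nhds
  refine tendsto_of_tendsto_of_tendsto_of_le_of_le' (hlim (p 0)) (hlim (p 1)) ?_ ?_
  · filter_upwards [self_mem_nhdsWithin] with w hw using hlower w (le_of_lt hw)
  · filter_upwards [Ioo_mem_nhdsGT zero_lt_one] with w hw using hupper w ⟨hw.1.le, hw.2.le⟩

end Primitive

section Subgradient

variable {φ p : ℝ → ℝ} {u v : ℝ}

theorem IsSubgradientOn.forall_Ico_le (hp : MonotoneOn p (Ici 0))
    (hφ : ∀ u ≥ 0, φ u = ∫ t in Ioc 0 u, p t) (h : IsSubgradientOn φ (Ici 0) u v) :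
    ∀ t ∈ Ico 0 u, p t ≤ v := by
  intro t ⟨ht0, htu⟩
  have hslope := mul_le_sub_of_monotoneOn hp hφ ht0 htu.le
  have hsub := h t ht0
  refine le_of_mul_le_mul_left ?_ (sub_pos.2 htu)
  linarith

theorem IsSubgradientOn.le_of_continuousWithinAt (hp : MonotoneOn p (Ici 0))
    (hφ : ∀ u ≥ 0, φ u = ∫ t in Ioc 0 u, p t) (hpc : ContinuousWithinAt p (Ici u) u)
    (hu : 0 ≤ u) (h : IsSubgradientOn φ (Ici 0) u v) : v ≤ p u := by
  by_contra! hlt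
  have hev : ∀ᶠ w in 𝓝[>] u, p w < v :=
    (Tendsto.eventually_lt_const hlt hpc).filter_mono (nhdsWithin_mono u Ioi_subset_Ici_self)
  obtain ⟨w, hpw, huw : u < w⟩ := (hev.and self_mem_nhdsWithin).exists
  have hslope := sub_le_mul_of_forall_Ioo_le hp hφ hu huw.le
    fun t ht => hp (hu.trans ht.1.le) (hu.trans huw.le) ht.2.le
  have hsub := h w (hu.trans huw.le)
  have := le_of_mul_le_mul_left (hsub.trans hslope) (sub_pos.2 huw)
  linarith

theorem isSubgradientOn_of_forall_Ico_le (hp : MonotoneOn p (Ici 0))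
    (hφ : ∀ u ≥ 0, φ u = ∫ t in Ioc 0 u, p t) (hu : 0 ≤ u)
    (hleft : ∀ t ∈ Ico 0 u, p t ≤ v) (hright : v ≤ p u) :
    IsSubgradientOn φ (Ici 0) u v := by
  intro w (hw : 0 ≤ w)
  rcases le_or_gt u w with huw | hwu
  · calc (w - u) * v ≤ (w - u) * p u := mul_le_mul_of_nonneg_left hright (sub_nonneg.2 huw)
      _ ≤ φ w - φ u := mul_le_sub_of_monotoneOn hp hφ hu huw
  · have := sub_le_mul_of_forall_Ioo_le hp hφ hw hwu.le
      fun t ht => hleft t ⟨hw.trans ht.1.le, ht.2⟩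
    linarith

theorem isSubgradientOn_iff (hp : MonotoneOn p (Ici 0))
    (hφ : ∀ u ≥ 0, φ u = ∫ t in Ioc 0 u, p t) (hpc : ContinuousWithinAt p (Ici u) u)
    (hu : 0 ≤ u) :
    IsSubgradientOn φ (Ici 0) u v ↔ (∀ t ∈ Ico 0 u, p t ≤ v) ∧ v ≤ p u :=
  ⟨fun h => ⟨h.forall_Ico_le hp hφ, h.le_of_continuousWithinAt hp hφ hpc hu⟩,
    fun h => isSubgradientOn_of_forall_Ico_le hp hφ hu h.1 h.2⟩

end Subgradient

section Conjugate

variable {φ p : ℝ → ℝ} {u v w : ℝ}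

theorem mul_sub_le_sSup (hp : MonotoneOn p (Ici 0)) (hφ : ∀ u ≥ 0, φ u = ∫ t in Ioc 0 u, p t)
    (hbdd : BddAbove ((fun u => u * v - φ u) '' Ioi 0)) (hw : 0 ≤ w) :
    w * v - φ w ≤ sSup ((fun u => u * v - φ u) '' Ioi 0) := by
  rcases hw.eq_or_lt with rfl | hw
  · have hlim : Tendsto (fun u => u * v - φ u) (𝓝[>] 0) (𝓝 (0 * v - φ 0)) := by
      have hφ0 : φ 0 = 0 := by simp [hφ 0 le_rfl]
      rw [hφ0, zero_mul, sub_zero]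
      simpa using ((continuous_mul_const v).tendsto' 0 0 (zero_mul v)).mono_left
        nhdsWithin_le_nhds |>.sub (tendsto_nhdsGT_zero_of_primitive hp hφ)
    exact le_of_tendsto hlim
      (eventually_nhdsWithin_of_forall fun u hu => le_csSup hbdd (mem_image_of_mem _ hu))
  · exact le_csSup hbdd (mem_image_of_mem _ hw)

theorem mul_eq_add_sSup_iff (hp : MonotoneOn p (Ici 0)) (hφ : ∀ u ≥ 0, φ u = ∫ t in Ioc 0 u, p t)
    (hbdd : BddAbove ((fun u => u * v - φ u) '' Ioi 0)) (hu : 0 ≤ u) :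
    u * v = φ u + sSup ((fun u => u * v - φ u) '' Ioi 0) ↔ IsSubgradientOn φ (Ici 0) u v := by
  constructor
  · intro h w (hw : 0 ≤ w)
    have := mul_sub_le_sSup hp hφ hbdd hw
    linarith
  · intro h
    have hle : sSup ((fun u => u * v - φ u) '' Ioi 0) ≤ u * v - φ u :=
      csSup_le (Nonempty.image _ nonempty_Ioi) <| forall_mem_image.2 fun w hw => by
        have := h w (mem_Ici.2 (le_of_lt hw))
        linarith
    have := mul_sub_le_sSup hp hφ hbdd hu
    linarith

end Conjugate

theorem leftLim_le_iff {p pm : ℝ → ℝ} {u v : ℝ} (hp : MonotoneOn p (Ici 0)) (hpm0 : pm 0 = 0)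
    (hpm : ∀ t > (0 : ℝ), pm t = sSup (p '' Ico 0 t)) (hu : 0 ≤ u) (hv : 0 ≤ v) :
    pm u ≤ v ↔ ∀ t ∈ Ico 0 u, p t ≤ v := by
  rcases hu.eq_or_lt with rfl | hu
  · simp [hpm0, hv]
  · rw [hpm u hu, csSup_le_iff ⟨p u, forall_mem_image.2 fun t ht => hp ht.1 hu.le ht.2.le⟩
      ((nonempty_Ico.2 hu).image p), forall_mem_image]

theorem young_equality_case_general (φ ψ p pm : ℝ → ℝ)
    (hpmono : MonotoneOn p (Set.Ici 0))
    (hprc : ∀ u ≥ (0 : ℝ), ContinuousWithinAt p (Set.Ici u) u)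
    (hφint : ∀ u ≥ (0 : ℝ), φ u = ∫ t in Set.Ioc (0 : ℝ) u, p t)
    (hpm0 : pm 0 = 0)
    (hpm : ∀ t > (0 : ℝ), pm t = sSup (p '' Set.Ico (0 : ℝ) t))
    (hbdd : ∀ v ≥ (0 : ℝ), BddAbove ((fun u => u * v - φ u) '' Set.Ioi (0 : ℝ)))
    (hψ : ∀ v : ℝ, ψ v = sSup ((fun u => u * v - φ u) '' Set.Ioi (0 : ℝ))) :
    ∀ u ≥ (0 : ℝ), ∀ v ≥ (0 : ℝ),
      (u * v = φ u + ψ v ↔ v ∈ Set.Icc (pm u) (p u)) := by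
  intro u hu v hv
  rw [hψ, mul_eq_add_sSup_iff hpmono hφint (hbdd v hv) hu,
    isSubgradientOn_iff hpmono hφint (hprc u hu) hu, mem_Icc,
    leftLim_le_iff hpmono hpm0 hpm hu hv]

/-- Equality case of Young's inequality.  For an Orlicz function
`φ(u) = ∫₀ᵘ p` with non-decreasing right-continuous right-derivative `p`, left-limit
function `p₋` (`p₋ 0 = 0`, `p₋ t = sup {p s : 0 ≤ s < t}` for `t > 0`), and complementary
function `ψ(v) = sup_{u>0}(u·v − φ(u))`, for all `u, v ≥ 0` the equality
`u·v = φ(u) + ψ(v)` holds iff `v ∈ [p₋(u), p(u)]`. -/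
theorem young_equality_case (φ ψ p pm : ℝ → ℝ)
    (hconv : ConvexOn ℝ (Set.Ici 0) φ) (hφ0 : φ 0 = 0)
    (hφpos : ∀ u > (0 : ℝ), 0 < φ u)
    (hpmono : MonotoneOn p (Set.Ici 0)) (hpnn : ∀ u ≥ (0 : ℝ), 0 ≤ p u)
    (hprc : ∀ u ≥ (0 : ℝ), ContinuousWithinAt p (Set.Ici u) u)
    (hφint : ∀ u ≥ (0 : ℝ), φ u = ∫ t in Set.Ioc (0 : ℝ) u, p t)
    (hpm0 : pm 0 = 0)
    (hpm : ∀ t > (0 : ℝ), pm t = sSup (p '' Set.Ico (0 : ℝ) t))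
    (hbdd : ∀ v ≥ (0 : ℝ), BddAbove ((fun u => u * v - φ u) '' Set.Ioi (0 : ℝ)))
    (hψ : ∀ v : ℝ, ψ v = sSup ((fun u => u * v - φ u) '' Set.Ioi (0 : ℝ))) :
    ∀ u ≥ (0 : ℝ), ∀ v ≥ (0 : ℝ),
      (u * v = φ u + ψ v ↔ v ∈ Set.Icc (pm u) (p u)) :=
  young_equality_case_general φ ψ p pm hpmono hprc hφint hpm0 hpm hbdd hψ
end

section
/- If f and fₙ are measurable functions with |f| ≤ liminf_{n→∞} |fₙ| almost everywhere, then f* ≤ liminf_{n→∞} fₙ* pointwise, where g* denotes the decreasing rearrangement of g. -/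
/-!
Up to a null set, `{λ < |f|}` lies in `liminf {λ < |fₙ|}`, so Fatou's lemma for sets (which holds
for arbitrary sets, continuity from below being valid for them) gives
`μ_f(λ) ≤ liminf μ_{fₙ}(λ)`. A level `λ` above `liminf fₙ*(t)` lies above `fₙ*(t)` for infinitely
many `n`, and for those `μ_{fₙ}(λ) ≤ t`; hence `μ_f(λ) ≤ t`, i.e. `f*(t) ≤ λ`.
-/

open MeasureTheory Set Filter
open scoped ENNReal

/-- Distribution function `μ_f(λ) = μ{s ∈ (0,∞) : |f s| > λ}` (Lebesgue measure). -/
noncomputable def distrib (f : ℝ → ℝ) (lam : ℝ≥0∞) : ℝ≥0∞ :=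
  volume {s ∈ Set.Ioi (0 : ℝ) | lam < ENNReal.ofReal |f s|}

/-- Decreasing rearrangement `f*(t) = inf {λ : μ_f(λ) ≤ t}` (with `inf ∅ = ∞`). -/
noncomputable def rearr (f : ℝ → ℝ) (t : ℝ) : ℝ≥0∞ :=
  sInf {lam : ℝ≥0∞ | distrib f lam ≤ ENNReal.ofReal t}

theorem MeasureTheory.measure_liminf_le_liminf_measure {α : Type*} [MeasurableSpace α]
    (μ : Measure α) (s : ℕ → Set α) :
    μ (liminf s atTop) ≤ liminf (fun n => μ (s n)) atTop := by
  have hmono : Monotone fun k => ⋂ i ≥ k, s i :=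
    fun k l hkl => biInter_mono (fun i hi => le_trans hkl hi) fun _ _ => le_rfl
  rw [liminf_eq_iSup_iInf_of_nat, liminf_eq_iSup_iInf_of_nat]
  simp only [iSup_eq_iUnion, iInf_eq_iInter]
  rw [hmono.measure_iUnion]
  exact iSup_mono fun k => le_iInf₂ fun i hi => measure_mono (biInter_subset_of_mem hi)

theorem distrib_antitone (f : ℝ → ℝ) : Antitone (distrib f) :=
  fun _ _ hle => measure_mono fun _ hs => ⟨hs.1, lt_of_le_of_lt hle hs.2⟩

theorem distrib_le_of_rearr_lt {f : ℝ → ℝ} {t : ℝ} {lam : ℝ≥0∞} (h : rearr f t < lam) :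
    distrib f lam ≤ ENNReal.ofReal t := by
  obtain ⟨mu, hmu, hlt⟩ := sInf_lt_iff.mp h
  exact (distrib_antitone f hlt.le).trans hmu

theorem rearr_le_of_forall_lt_distrib_le {f : ℝ → ℝ} {t : ℝ} {c : ℝ≥0∞}
    (h : ∀ lam, c < lam → distrib f lam ≤ ENNReal.ofReal t) : rearr f t ≤ c :=
  le_of_forall_gt_imp_ge_of_dense fun lam hlam => sInf_le (h lam hlam)

theorem rearr_le_liminf_of_distrib_le_liminf {f : ℝ → ℝ} {F : ℕ → ℝ → ℝ}
    (h : ∀ lam, distrib f lam ≤ liminf (fun n => distrib (F n) lam) atTop) (t : ℝ) :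
    rearr f t ≤ liminf (fun n => rearr (F n) t) atTop := by
  refine rearr_le_of_forall_lt_distrib_le fun lam hlam => ?_
  have hfreq : ∃ᶠ n in atTop, distrib (F n) lam ≤ ENNReal.ofReal t :=
    (frequently_lt_of_liminf_lt (by isBoundedDefault) hlam).mono
      fun _ hn => distrib_le_of_rearr_lt hn
  exact (h lam).trans (liminf_le_of_frequently_le hfreq)

theorem distrib_le_liminf {f : ℝ → ℝ} {F : ℕ → ℝ → ℝ}
    (h : ∀ᵐ s ∂(volume.restrict (Ioi (0 : ℝ))),
      ENNReal.ofReal |f s| ≤ liminf (fun n => ENNReal.ofReal |F n s|) atTop)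
    (lam : ℝ≥0∞) :
    distrib f lam ≤ liminf (fun n => distrib (F n) lam) atTop := by
  have hsub : {s ∈ Ioi (0 : ℝ) | lam < ENNReal.ofReal |f s|} ≤ᵐ[volume]
      liminf (α := Set ℝ) (fun n => {s ∈ Ioi 0 | lam < ENNReal.ofReal |F n s|}) atTop := by
    filter_upwards [(ae_restrict_iff' measurableSet_Ioi).mp h] with s hs ⟨hpos, hlam⟩
    have hev : ∀ᶠ n in atTop, lam < ENNReal.ofReal |F n s| :=
      eventually_lt_of_lt_liminf (hlam.trans_le (hs hpos))
    exact mem_liminf_iff_eventually_mem.mpr (hev.mono fun _ hn => ⟨hpos, hn⟩)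
  exact (measure_mono_ae hsub).trans (measure_liminf_le_liminf_measure _ _)

theorem rearr_liminf_general (f : ℝ → ℝ) (F : ℕ → ℝ → ℝ)
    (h : ∀ᵐ s ∂(volume.restrict (Set.Ioi (0 : ℝ))),
      ENNReal.ofReal |f s| ≤ Filter.liminf (fun n => ENNReal.ofReal |F n s|) Filter.atTop) :
    ∀ t : ℝ, rearr f t ≤ Filter.liminf (fun n => rearr (F n) t) Filter.atTop :=
  rearr_le_liminf_of_distrib_le_liminf (distrib_le_liminf h)

/-- If `|f| ≤ liminf |fₙ|` a.e. on `(0,∞)`, then `f* ≤ liminf fₙ*`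
pointwise (values and liminfs taken in `ℝ≥0∞`). -/
theorem rearr_liminf (f : ℝ → ℝ) (F : ℕ → ℝ → ℝ)
    (hf : Measurable f) (hF : ∀ n, Measurable (F n))
    (h : ∀ᵐ s ∂(volume.restrict (Set.Ioi (0 : ℝ))),
      ENNReal.ofReal |f s| ≤ Filter.liminf (fun n => ENNReal.ofReal |F n s|) Filter.atTop) :
    ∀ t : ℝ, rearr f t ≤ Filter.liminf (fun n => rearr (F n) t) Filter.atTop :=
  rearr_liminf_general f F h
end

section
/- Hardy–Littlewood inequality: for measurable functions f and g on (0,∞), ∫|f·g| dμ ≤ ∫₀^∞ f*(t)·g*(t) dt, where f* and g* are decreasing rearrangements. -/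
/-! By the layer-cake formula applied twice, `∫ φ ψ = ∫∫ μ {φ > l, ψ > m} dl dm` for nonnegative
measurable `φ, ψ`. For `|f|, |g|` the set `{|f| > l} ∩ {|g| > m}` has measure at most
`min (μ_f l) (μ_g m)`. For `f*, g*` it is exactly the interval `{t : t < min (μ_f l) (μ_g m)}`,
because `l < f* t ↔ t < μ_f l` by right continuity of the distribution function `μ_f`. -/

open MeasureTheory Set Filter
open scoped ENNReal

theorem volume_restrict_Ioi_setOf_ofReal_lt (a : ℝ≥0∞) :
    volume.restrict (Ioi (0 : ℝ)) {t | ENNReal.ofReal t < a} = a := by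
  rw [Measure.restrict_apply' measurableSet_Ioi]
  rcases eq_or_ne a ∞ with rfl | ha
  · simp [ENNReal.ofReal_lt_top]
  · have : {t : ℝ | ENNReal.ofReal t < a} ∩ Ioi 0 = Ioo 0 a.toReal := by
      ext t
      simp only [mem_inter_iff, mem_ofPred_eq, mem_Ioi, mem_Ioo]
      exact ⟨fun ⟨hta, ht⟩ => ⟨ht, (ENNReal.ofReal_lt_iff_lt_toReal ht.le ha).1 hta⟩,
        fun ⟨ht, hta⟩ => ⟨(ENNReal.ofReal_lt_iff_lt_toReal ht.le ha).2 hta, ht⟩⟩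
    rw [this, Real.volume_Ioo, sub_zero, ENNReal.ofReal_toReal ha]

section LayerCake

variable {α : Type*} [MeasurableSpace α] (μ : Measure α) [SFinite μ]

theorem lintegral_eq_lintegral_meas_ofReal_lt {φ : α → ℝ≥0∞} (hφ : Measurable φ) :
    ∫⁻ s, φ s ∂μ = ∫⁻ t in Ioi 0, μ {s | ENNReal.ofReal t < φ s} := by
  have hE : MeasurableSet {p : α × ℝ | ENNReal.ofReal p.2 < φ p.1} :=
    measurableSet_lt (ENNReal.measurable_ofReal.comp measurable_snd) (hφ.comp measurable_fst)
  calc ∫⁻ s, φ s ∂μ = ∫⁻ s, volume.restrict (Ioi 0) {t | ENNReal.ofReal t < φ s} ∂μ := by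
        simp_rw [volume_restrict_Ioi_setOf_ofReal_lt]
    _ = μ.prod (volume.restrict (Ioi 0)) {p | ENNReal.ofReal p.2 < φ p.1} :=
        (Measure.prod_apply hE).symm
    _ = _ := Measure.prod_apply_symm hE

theorem lintegral_mul_eq_lintegral_lintegral_meas {φ ψ : α → ℝ≥0∞} (hφ : Measurable φ)
    (hψ : Measurable ψ) :
    ∫⁻ s, φ s * ψ s ∂μ = ∫⁻ m in Ioi 0, ∫⁻ l in Ioi 0,
      μ ({s | ENNReal.ofReal l < φ s} ∩ {s | ENNReal.ofReal m < ψ s}) := by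
  calc ∫⁻ s, φ s * ψ s ∂μ = ∫⁻ s, ψ s ∂μ.withDensity φ :=
        (lintegral_withDensity_eq_lintegral_mul μ hφ hψ).symm
    _ = ∫⁻ m in Ioi 0, ∫⁻ s in {s | ENNReal.ofReal m < ψ s}, φ s ∂μ := by
        rw [lintegral_eq_lintegral_meas_ofReal_lt _ hψ]
        exact lintegral_congr fun m => withDensity_apply _ (measurableSet_lt measurable_const hψ)
    _ = _ := by
        refine lintegral_congr fun m => ?_
        rw [lintegral_eq_lintegral_meas_ofReal_lt _ hφ]
        exact lintegral_congr fun l => Measure.restrict_apply (measurableSet_lt measurable_const hφ)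

end LayerCake

theorem measure_setOf_lt_le_of_forall_gt {α : Type*} [MeasurableSpace α] {μ : Measure α}
    {φ : α → ℝ≥0∞} {lam c : ℝ≥0∞} (h : ∀ m, lam < m → μ {s | m < φ s} ≤ c) :
    μ {s | lam < φ s} ≤ c := by
  rcases eq_top_or_lt_top lam with rfl | hlam
  · simp
  obtain ⟨u, hu_anti, hu_mem, hu_lim⟩ := exists_seq_strictAnti_tendsto' hlam
  have hunion : {s | lam < φ s} = ⋃ n, {s | u n < φ s} := by
    ext s
    simp only [mem_ofPred_eq, mem_iUnion]
    exact ⟨fun hs => (hu_lim.eventually_lt_const hs).exists,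
      fun ⟨n, hn⟩ => (hu_mem n).1.trans hn⟩
  have hmono : Monotone fun n => {s | u n < φ s} := fun m n hmn s hs =>
    (hu_anti.antitone hmn).trans_lt hs
  rw [hunion, hmono.measure_iUnion]
  exact iSup_le fun n => h _ (hu_mem n).1

theorem distrib_eq_restrict (f : ℝ → ℝ) (lam : ℝ≥0∞) :
    distrib f lam = volume.restrict (Ioi 0) {s | lam < ENNReal.ofReal |f s|} := by
  rw [Measure.restrict_apply' measurableSet_Ioi, distrib, inter_comm]
  rfl

theorem rearr_antitone (f : ℝ → ℝ) : Antitone (rearr f) := fun _ _ hst =>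
  sInf_le_sInf fun _ hl => hl.trans (ENNReal.ofReal_le_ofReal hst)

theorem rearr_le_iff (f : ℝ → ℝ) (t : ℝ) (lam : ℝ≥0∞) :
    rearr f t ≤ lam ↔ distrib f lam ≤ ENNReal.ofReal t := by
  refine ⟨fun h => ?_, fun h => sInf_le h⟩
  rw [distrib_eq_restrict]
  refine measure_setOf_lt_le_of_forall_gt fun m hm => ?_
  obtain ⟨nu, hnu, hnu_lt⟩ := sInf_lt_iff.1 (h.trans_lt hm)
  rw [← distrib_eq_restrict]
  exact (distrib_antitone f hnu_lt.le).trans hnu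

theorem lt_rearr_iff (f : ℝ → ℝ) (t : ℝ) (lam : ℝ≥0∞) :
    lam < rearr f t ↔ ENNReal.ofReal t < distrib f lam := by
  rw [← not_le, ← not_le, rearr_le_iff]

theorem volume_restrict_Ioi_inter_setOf_lt_rearr (f g : ℝ → ℝ) (l m : ℝ≥0∞) :
    volume.restrict (Ioi 0) ({t | l < rearr f t} ∩ {t | m < rearr g t}) =
      min (distrib f l) (distrib g m) := by
  have : {t | l < rearr f t} ∩ {t | m < rearr g t} =
      {t | ENNReal.ofReal t < min (distrib f l) (distrib g m)} := by
    ext t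
    simp only [mem_inter_iff, mem_ofPred_eq, lt_rearr_iff, lt_min_iff]
  rw [this, volume_restrict_Ioi_setOf_ofReal_lt]

/-- Hardy–Littlewood inequality:
`∫ |f·g| dμ ≤ ∫₀^∞ f*(t)·g*(t) dt`. -/
theorem hardy_littlewood (f g : ℝ → ℝ) (hf : Measurable f) (hg : Measurable g) :
    ∫⁻ s in Set.Ioi (0 : ℝ), ENNReal.ofReal |f s * g s| ≤
      ∫⁻ t in Set.Ioi (0 : ℝ), rearr f t * rearr g t := by
  simp_rw [abs_mul, ENNReal.ofReal_mul (abs_nonneg _)]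
  rw [lintegral_mul_eq_lintegral_lintegral_meas _ hf.abs.ennreal_ofReal hg.abs.ennreal_ofReal,
    lintegral_mul_eq_lintegral_lintegral_meas _ (rearr_antitone f).measurable
      (rearr_antitone g).measurable]
  refine lintegral_mono fun m => lintegral_mono fun l => ?_
  rw [volume_restrict_Ioi_inter_setOf_lt_rearr, distrib_eq_restrict, distrib_eq_restrict]
  exact le_min (measure_mono inter_subset_left) (measure_mono inter_subset_right)
end
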